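/- In a network of N nodes whose WiFi graph is a complete graph (no WiFi link is a rate bottleneck), the hotspot configuration with exactly one hotspot—the node with the largest cellular SINR—achieves the maximum possible sum rate log2(1 + max_i SINR_i) over all hotspot configurations, and this configuration is feasible, i.e., each node can be allocated a rate at least its baseline rate (1/N)·log2(1 + SINR_i). -/

import Mathlib

open Finset Real

/-! Every hotspot link carries at most `log₂(1 + SINR m)`, so any average of link rates is at most
that; in particular the baseline rates, which average the link rates over all `N` nodes, sum to at
most `log₂(1 + SINR m)`, and the single hotspot `m` can hand the remaining slack to one node. -/

theorem Finset.one_div_card_mul_sum_le {ι K : Type*} [Field K] [LinearOrder K]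
    [IsStrictOrderedRing K] {S : Finset ι} (hS : S.Nonempty) {f : ι → K} {M : K}
    (hf : ∀ i ∈ S, f i ≤ M) : 1 / (#S : K) * ∑ i ∈ S, f i ≤ M := by
  rw [one_div_mul_eq_div, div_le_iff₀ (by exact_mod_cast hS.card_pos), mul_comm,
    ← nsmul_eq_mul]
  exact sum_le_card_nsmul S f M hf

theorem exists_le_sum_eq_of_sum_le {ι K : Type*} [Fintype ι] [Nonempty ι] [AddCommGroup K]
    [PartialOrder K] [IsOrderedAddMonoid K] {f : ι → K} {L : K} (h : ∑ i, f i ≤ L) :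
    ∃ g : ι → K, (∀ i, f i ≤ g i) ∧ ∑ i, g i = L := by
  classical
  obtain ⟨i₀⟩ := ‹Nonempty ι›
  refine ⟨f + Pi.single i₀ (L - ∑ i, f i), fun i => ?_, ?_⟩
  · have hslack : (0 : ι → K) ≤ Pi.single i₀ (L - ∑ i, f i) :=
      Pi.single_nonneg.2 (sub_nonneg.2 h)
    exact le_add_of_nonneg_right (hslack i)
  · simp only [Pi.add_apply, sum_add_distrib, sum_pi_single', mem_univ, if_true,
      add_sub_cancel]

theorem stmt0_general (N : ℕ) (SINR : Fin N → ℝ) (hpos : ∀ i, 0 < SINR i)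
    (m : Fin N) (hm : ∀ i, SINR i ≤ SINR m) :
    (∀ S : Finset (Fin N), S.Nonempty →
      (1 / (S.card : ℝ)) * ∑ i ∈ S, Real.logb 2 (1 + SINR i)
        ≤ Real.logb 2 (1 + SINR m)) ∧
    (∃ R : Fin N → ℝ,
      (∀ i, (1 / (N : ℝ)) * Real.logb 2 (1 + SINR i) ≤ R i) ∧
      ∑ i, R i = Real.logb 2 (1 + SINR m)) := by
  have hrate : ∀ i, logb 2 (1 + SINR i) ≤ logb 2 (1 + SINR m) := fun i =>
    logb_le_logb_of_le one_lt_two (by linarith [hpos i]) (by linarith [hm i])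
  have hsum : ∀ S : Finset (Fin N), S.Nonempty →
      1 / (#S : ℝ) * ∑ i ∈ S, logb 2 (1 + SINR i) ≤ logb 2 (1 + SINR m) :=
    fun S hS => S.one_div_card_mul_sum_le hS fun i _ => hrate i
  have : Nonempty (Fin N) := ⟨m⟩
  refine ⟨hsum, exists_le_sum_eq_of_sum_le ?_⟩
  have hbaseline := hsum univ univ_nonempty
  rwa [card_univ, Fintype.card_fin, mul_sum] at hbaseline

/-- In a network of `N` nodes whose WiFi graph is a complete graph (no WiFi link
is a rate bottleneck), the configuration with exactly one hotspot — the node `m`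
with the largest cellular SINR — achieves the maximum possible sum rate
`log₂(1 + SINR m)` over all hotspot configurations (a hotspot set `S` gives sum
rate `(1/|S|) * Σ_{i∈S} log₂(1 + SINR i)`), and this configuration is feasible:
rates summing to `log₂(1 + SINR m)` can be allocated with every node getting at
least its baseline rate `(1/N) log₂(1 + SINR i)`. -/
theorem stmt0 (N : ℕ) (hN : 1 ≤ N) (SINR : Fin N → ℝ) (hpos : ∀ i, 0 < SINR i)
    (m : Fin N) (hm : ∀ i, SINR i ≤ SINR m) :
    (∀ S : Finset (Fin N), S.Nonempty →
      (1 / (S.card : ℝ)) * ∑ i ∈ S, Real.logb 2 (1 + SINR i)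
        ≤ Real.logb 2 (1 + SINR m)) ∧
    (∃ R : Fin N → ℝ,
      (∀ i, (1 / (N : ℝ)) * Real.logb 2 (1 + SINR i) ≤ R i) ∧
      ∑ i, R i = Real.logb 2 (1 + SINR m)) :=
  stmt0_general N SINR hpos m hm
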